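/- Under the assumptions of the previous integration-by-parts lemma, the explicit score matching objective ∫ (1/2)(f'(x) - (log p)'(x))² p(x) dx equals ∫ [(1/2) f'(x)² + f''(x)] p(x) dx plus the constant ∫ (1/2)((log p)'(x))² p(x) dx, which does not depend on f. -/

import Mathlib

/-!
Expanding the square, the explicit objective is `½∫ f'² p + ½∫ s² p - ∫ s f' p` with the score
`s = (log p)'`. Since `s p = p'`, integrating by parts (the boundary term `f' p` vanishes at `±∞`)
gives Stein's identity `∫ s f' p = -∫ f'' p`, which turns the cross term into the `f''` term of
the implicit objective.
-/

open MeasureTheory Filter Real Topology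

theorem deriv_log_comp_mul_self {p : ℝ → ℝ} {x : ℝ} (hp : DifferentiableAt ℝ p x)
    (hpx : p x ≠ 0) : deriv (fun y => log (p y)) x * p x = deriv p x := by
  rw [(hp.hasDerivAt.log hpx).deriv, div_mul_cancel₀ _ hpx]

theorem integral_deriv_log_mul_mul_eq_neg {p g : ℝ → ℝ} (hp : ∀ x, p x ≠ 0)
    (hpd : Differentiable ℝ p) (hgd : Differentiable ℝ g)
    (hg'p : Integrable (fun x => deriv g x * p x))
    (hsgp : Integrable (fun x => deriv (fun y => log (p y)) x * g x * p x))
    (htop : Tendsto (fun x => g x * p x) atTop (𝓝 0))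
    (hbot : Tendsto (fun x => g x * p x) atBot (𝓝 0)) :
    ∫ x, deriv (fun y => log (p y)) x * g x * p x = -∫ x, deriv g x * p x := by
  have hscore : ∀ x, deriv (fun y => log (p y)) x * g x * p x = g x * deriv p x := fun x => by
    rw [mul_right_comm, deriv_log_comp_mul_self (hpd x) (hp x), mul_comm]
  simp_rw [hscore] at hsgp ⊢
  rw [integral_mul_deriv_eq_deriv_mul (fun x _ => (hgd x).hasDerivAt)
    (fun x _ => (hpd x).hasDerivAt) hsgp hg'p hbot htop, sub_self, zero_sub]

theorem esm_eq_ism_add_const_general (p f : ℝ → ℝ)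
    (hp : ∀ x, 0 < p x) (hpC1 : ContDiff ℝ 1 p) (hfC2 : ContDiff ℝ 2 f)
    (hint2 : MeasureTheory.Integrable (fun x => deriv (deriv f) x * p x))
    (hint3 : MeasureTheory.Integrable
      (fun x => deriv (fun y => Real.log (p y)) x * deriv f x * p x))
    (hint4 : MeasureTheory.Integrable (fun x => (deriv f x) ^ 2 * p x))
    (hint5 : MeasureTheory.Integrable
      (fun x => (deriv (fun y => Real.log (p y)) x) ^ 2 * p x))
    (htop : Filter.Tendsto (fun x => deriv f x * p x) Filter.atTop (nhds 0))
    (hbot : Filter.Tendsto (fun x => deriv f x * p x) Filter.atBot (nhds 0)) :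
    ∫ x, (1 / 2) * (deriv f x - deriv (fun y => Real.log (p y)) x) ^ 2 * p x
      = (∫ x, ((1 / 2) * (deriv f x) ^ 2 + deriv (deriv f) x) * p x)
        + ∫ x, (1 / 2) * (deriv (fun y => Real.log (p y)) x) ^ 2 * p x := by
  have hf'd : Differentiable ℝ (deriv f) :=
    (hfC2.iterate_deriv' 1 1).differentiable one_ne_zero
  have hstein := integral_deriv_log_mul_mul_eq_neg (fun x => (hp x).ne')
    (hpC1.differentiable one_ne_zero) hf'd hint2 hint3 htop hbot
  set s := deriv (fun y => log (p y))
  have hhalf4 := hint4.const_mul (1 / 2)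
  have hhalf5 := hint5.const_mul (1 / 2)
  calc ∫ x, (1 / 2) * (deriv f x - s x) ^ 2 * p x
      = ∫ x, ((1 / 2) * ((deriv f x) ^ 2 * p x) + (1 / 2) * (s x ^ 2 * p x))
          - s x * deriv f x * p x := by
        congr 1; ext x; ring
    _ = (1 / 2) * (∫ x, (deriv f x) ^ 2 * p x) + (1 / 2) * (∫ x, s x ^ 2 * p x)
          - ∫ x, s x * deriv f x * p x := by
        rw [integral_sub _ hint3, integral_add hhalf4 hhalf5,
          integral_const_mul, integral_const_mul]
        exact hhalf4.add hhalf5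
    _ = (∫ x, (1 / 2) * ((deriv f x) ^ 2 * p x) + deriv (deriv f) x * p x)
          + ∫ x, (1 / 2) * (s x ^ 2 * p x) := by
        rw [integral_add hhalf4 hint2, integral_const_mul, integral_const_mul, hstein]
        ring
    _ = _ := by
        congr 1 <;> congr 1 <;> ext x <;> ring

/-- Explicit score matching equals implicit score matching plus a constant
independent of `f`, in one dimension. -/
theorem esm_eq_ism_add_const (p f : ℝ → ℝ)
    (hp : ∀ x, 0 < p x) (hpC1 : ContDiff ℝ 1 p) (hfC2 : ContDiff ℝ 2 f)
    (hint1 : MeasureTheory.Integrable (fun x => deriv f x * p x))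
    (hint2 : MeasureTheory.Integrable (fun x => deriv (deriv f) x * p x))
    (hint3 : MeasureTheory.Integrable
      (fun x => deriv (fun y => Real.log (p y)) x * deriv f x * p x))
    (hint4 : MeasureTheory.Integrable (fun x => (deriv f x) ^ 2 * p x))
    (hint5 : MeasureTheory.Integrable
      (fun x => (deriv (fun y => Real.log (p y)) x) ^ 2 * p x))
    (htop : Filter.Tendsto (fun x => deriv f x * p x) Filter.atTop (nhds 0))
    (hbot : Filter.Tendsto (fun x => deriv f x * p x) Filter.atBot (nhds 0)) :
    ∫ x, (1 / 2) * (deriv f x - deriv (fun y => Real.log (p y)) x) ^ 2 * p x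
      = (∫ x, ((1 / 2) * (deriv f x) ^ 2 + deriv (deriv f) x) * p x)
        + ∫ x, (1 / 2) * (deriv (fun y => Real.log (p y)) x) ^ 2 * p x :=
  esm_eq_ism_add_const_general p f hp hpC1 hfC2 hint2 hint3 hint4 hint5 htop hbot
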